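/- Let 0 < σ_{n+m}² < σ_n², let 0 < a_1 ≤ a_2 ≤ ⋯ ≤ a_n, and let C > 0. Then the maximum of Σ_{i=1}^n log( (σ_{n+m}² + θ_i²)/(σ_n² + θ_i²) ) subject to Σ_{i=1}^n a_i² θ_i² ≤ C is attained at θ_i² = θ̃_i² := (1/2) [ (σ_n² − σ_{n+m}²) √(1 + (4λ̃/a_i²)/(σ_n² − σ_{n+m}²)) − (σ_n² + σ_{n+m}²) ]₊, where λ̃ > 0 solves Σ_{i=1}^n a_i² [ (σ_n² − σ_{n+m}²) √(1 + (4λ̃/a_i²)/(σ_n² − σ_{n+m}²)) − (σ_n² + σ_{n+m}²) ]₊ = 2C; moreover Σ_{i=1}^n a_i² θ̃_i² = C. -/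
import Mathlib


open MeasureTheory Real Filter ProbabilityTheory

/-- Product Gaussian density on `ℝᵏ` with mean vector `μ` and common variance `v`. -/
noncomputable def gaussD {k : ℕ} (μ : Fin k → ℝ) (v : ℝ) (x : Fin k → ℝ) : ℝ :=
  ∏ i, ((Real.sqrt (2 * Real.pi * v))⁻¹ * Real.exp (-((x i - μ i) ^ 2) / (2 * v)))

/-- Product Gaussian density with mean vector `μ` and coordinatewise variances `v`. -/
noncomputable def gaussDiagMean {k : ℕ} (μ v : Fin k → ℝ) (x : Fin k → ℝ) : ℝ :=
  ∏ i, ((Real.sqrt (2 * Real.pi * v i))⁻¹ * Real.exp (-((x i - μ i) ^ 2) / (2 * v i)))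

/-- Average KL risk `(1/m) E log(p(X̃|θ)/p̂(X̃|X))` in the Gaussian sequence model
`X|θ ~ N(θ, vn Iₙ)`, `X̃|θ ~ N(θ, vm Iₙ)` independent. -/
noncomputable def klRisk (n m : ℕ) (vn vm : ℝ) (θ : Fin n → ℝ)
    (phat : (Fin n → ℝ) → (Fin n → ℝ) → ℝ) : ℝ :=
  (m : ℝ)⁻¹ * ∫ x : Fin n → ℝ, ∫ xt : Fin n → ℝ,
    gaussD θ vn x * gaussD θ vm xt * Real.log (gaussD θ vm xt / phat x xt)

/-- Bayes predictive density under the diagonal Gaussian prior `N(0, diag s)`. -/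
noncomputable def bayesPredS (n : ℕ) (vn vm : ℝ) (s : Fin n → ℝ)
    (x xt : Fin n → ℝ) : ℝ :=
  (∫ θ : Fin n → ℝ, gaussD θ vn x * gaussD θ vm xt * gaussDiagMean 0 s θ) /
  (∫ θ : Fin n → ℝ, gaussD θ vn x * gaussDiagMean 0 s θ)

/-- The ellipsoid `Θ(C) = {θ : Σ aᵢ² θᵢ² ≤ C}`. -/
def ellipsoid (n : ℕ) (a : Fin n → ℝ) (C : ℝ) : Set (Fin n → ℝ) :=
  {θ | ∑ i, (a i) ^ 2 * (θ i) ^ 2 ≤ C}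

/-- `phat` is a predictive density: for each observation it is a probability density. -/
def IsPredDensity (n : ℕ) (phat : (Fin n → ℝ) → (Fin n → ℝ) → ℝ) : Prop :=
  ∀ x, (∀ y, 0 ≤ phat x y) ∧ (∫ y : Fin n → ℝ, phat x y) = 1

/-- Minimax average KL prediction risk over all predictive densities. -/
noncomputable def minimaxRisk (n m : ℕ) (vn vm : ℝ) (Θ : Set (Fin n → ℝ)) : ℝ :=
  sInf { r | ∃ phat, IsPredDensity n phat ∧
    r = sSup { t | ∃ θ ∈ Θ, t = klRisk n m vn vm θ phat } }

/-- Linear minimax risk: minimax over Bayes predictive densities under diagonal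
Gaussian priors. -/
noncomputable def linMinimaxRisk (n m : ℕ) (vn vm : ℝ) (Θ : Set (Fin n → ℝ)) : ℝ :=
  sInf { r | ∃ s : Fin n → ℝ, (∀ i, 0 ≤ s i) ∧
    r = sSup { t | ∃ θ ∈ Θ, t = klRisk n m vn vm θ (bayesPredS n vn vm s) } }

lemma tangent (vn vnm s t : ℝ) (h1 : 0 < vnm) (h2 : vnm < vn) (hs : 0 ≤ s) (ht : 0 ≤ t) :
    Real.log ((vnm + s) / (vn + s)) ≤ Real.log ((vnm + t) / (vn + t))
      + (s - t) * (vn - vnm) / ((vnm + t) * (vn + t)) := by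
  have p1 : (0:ℝ) < vnm + s := by linarith
  have p2 : (0:ℝ) < vn + s := by linarith
  have p3 : (0:ℝ) < vnm + t := by linarith
  have p4 : (0:ℝ) < vn + t := by linarith
  have key : Real.log (((vnm + s) * (vn + t)) / ((vn + s) * (vnm + t)))
      ≤ ((vnm + s) * (vn + t)) / ((vn + s) * (vnm + t)) - 1 :=
    Real.log_le_sub_one_of_pos (by positivity)
  have hlog : Real.log (((vnm + s) * (vn + t)) / ((vn + s) * (vnm + t)))
      = Real.log ((vnm + s) / (vn + s)) - Real.log ((vnm + t) / (vn + t)) := by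
    rw [Real.log_div (by positivity) (by positivity), Real.log_div p1.ne' p2.ne',
      Real.log_div p3.ne' p4.ne', Real.log_mul p1.ne' p4.ne', Real.log_mul p2.ne' p3.ne']
    ring
  have halg : ((vnm + s) * (vn + t)) / ((vn + s) * (vnm + t)) - 1
      ≤ (s - t) * (vn - vnm) / ((vnm + t) * (vn + t)) := by
    rw [div_sub_one (by positivity), div_le_div_iff₀ (by positivity) (by positivity)]
    nlinarith [mul_nonneg (mul_nonneg (sq_nonneg (s - t)) (by linarith : (0:ℝ) ≤ vn - vnm)) p3.le]
  linarith [hlog ▸ key]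

/-- the Lagrange-multiplier solution maximizes
`Σ log((σ_{n+m}² + θᵢ²)/(σ_n² + θᵢ²))` over the ellipsoid, and saturates the constraint. -/
theorem stmt5 (n : ℕ) (hn : 0 < n) (vn vnm : ℝ) (h1 : 0 < vnm) (h2 : vnm < vn)
    (a : Fin n → ℝ) (ha : ∀ i, 0 < a i) (hmono : Monotone a) (C : ℝ) (hC : 0 < C)
    (lam : ℝ) (hlam : 0 < lam)
    (tθsq : Fin n → ℝ)
    (htdef : ∀ i, tθsq i = (1 / 2) *
      max ((vn - vnm) * Real.sqrt (1 + (4 * lam / (a i) ^ 2) / (vn - vnm)) - (vn + vnm)) 0)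
    (hleq : ∑ i, (a i) ^ 2 *
      max ((vn - vnm) * Real.sqrt (1 + (4 * lam / (a i) ^ 2) / (vn - vnm)) - (vn + vnm)) 0
        = 2 * C) :
    (∑ i, (a i) ^ 2 * tθsq i = C) ∧
    ∀ θ : Fin n → ℝ, (∑ i, (a i) ^ 2 * (θ i) ^ 2 ≤ C) →
      ∑ i, Real.log ((vnm + (θ i) ^ 2) / (vn + (θ i) ^ 2)) ≤
        ∑ i, Real.log ((vnm + tθsq i) / (vn + tθsq i)) := by
  have hD : (0:ℝ) < vn - vnm := by linarith
  have hsum : ∑ i, (a i) ^ 2 * tθsq i = C := by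
    have h : ∑ i, (a i) ^ 2 * tθsq i = (1/2) * ∑ i, (a i) ^ 2 *
        max ((vn - vnm) * Real.sqrt (1 + (4 * lam / (a i) ^ 2) / (vn - vnm)) - (vn + vnm)) 0 := by
      rw [Finset.mul_sum]
      refine Finset.sum_congr rfl fun i _ => ?_
      rw [htdef i]; ring
    rw [h, hleq]; ring
  refine ⟨hsum, fun θ hθ => ?_⟩
  have ht0 : ∀ i, 0 ≤ tθsq i := fun i => by rw [htdef i]; positivity
  have hkey : ∀ i, Real.log ((vnm + (θ i) ^ 2) / (vn + (θ i) ^ 2)) ≤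
      Real.log ((vnm + tθsq i) / (vn + tθsq i)) + (a i) ^ 2 / lam * ((θ i) ^ 2 - tθsq i) := by
    intro i
    have hai : (0:ℝ) < a i := ha i
    have hE0 : (0:ℝ) ≤ 1 + (4 * lam / (a i) ^ 2) / (vn - vnm) := by positivity
    set E : ℝ := Real.sqrt (1 + (4 * lam / (a i) ^ 2) / (vn - vnm)) with hEdef
    have hE2 : E ^ 2 = 1 + (4 * lam / (a i) ^ 2) / (vn - vnm) := Real.sq_sqrt hE0
    have hE2' : E ^ 2 * ((a i) ^ 2 * (vn - vnm)) = (a i) ^ 2 * (vn - vnm) + 4 * lam := by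
      rw [hE2]; field_simp
    have hEpos : 0 < E := Real.sqrt_pos.mpr (by positivity)
    have tan := tangent vn vnm ((θ i) ^ 2) (tθsq i) h1 h2 (sq_nonneg _) (ht0 i)
    have hslope : ((θ i) ^ 2 - tθsq i) * (vn - vnm) / ((vnm + tθsq i) * (vn + tθsq i))
        ≤ (a i) ^ 2 / lam * ((θ i) ^ 2 - tθsq i) := by
      rcases le_or_gt ((vn - vnm) * E - (vn + vnm)) 0 with hneg | hpos
      · have htz : tθsq i = 0 := by rw [htdef i, ← hEdef, max_eq_right hneg]; ring
        have hDE2 : ((vn - vnm) * E) ^ 2 ≤ (vn + vnm) ^ 2 := by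
          have h0 : 0 ≤ (vn - vnm) * E := by positivity
          nlinarith
        have e1 : (a i) ^ 2 * ((vn - vnm) * E) ^ 2
            = (a i) ^ 2 * (vn - vnm) ^ 2 + 4 * lam * (vn - vnm) := by
          linear_combination (vn - vnm) * hE2'
        have e2 : (a i) ^ 2 * ((vn - vnm) * E) ^ 2 ≤ (a i) ^ 2 * (vn + vnm) ^ 2 :=
          mul_le_mul_of_nonneg_left hDE2 (pow_pos hai 2).le
        have hmain : lam * (vn - vnm) ≤ (a i) ^ 2 * (vnm * vn) := by nlinarith
        have h3 : (vn - vnm) / (vnm * vn) ≤ (a i) ^ 2 / lam := by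
          rw [div_le_div_iff₀ (mul_pos h1 (h1.trans h2)) hlam]; linarith
        rw [htz]
        calc ((θ i) ^ 2 - 0) * (vn - vnm) / ((vnm + 0) * (vn + 0))
            = (θ i) ^ 2 * ((vn - vnm) / (vnm * vn)) := by ring
          _ ≤ (θ i) ^ 2 * ((a i) ^ 2 / lam) := mul_le_mul_of_nonneg_left h3 (sq_nonneg _)
          _ = (a i) ^ 2 / lam * ((θ i) ^ 2 - 0) := by ring
      · have htv : tθsq i = (1/2) * ((vn - vnm) * E - (vn + vnm)) := by
          rw [htdef i, ← hEdef, max_eq_left hpos.le]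
        have hprod : (vnm + tθsq i) * (vn + tθsq i) = lam * (vn - vnm) / (a i) ^ 2 := by
          rw [htv, eq_div_iff (pow_ne_zero 2 hai.ne')]
          linear_combination ((vn - vnm) / 4) * hE2'
        rw [hprod]
        have heq : ((θ i) ^ 2 - tθsq i) * (vn - vnm) / (lam * (vn - vnm) / (a i) ^ 2)
            = (a i) ^ 2 / lam * ((θ i) ^ 2 - tθsq i) := by
          field_simp
        rw [heq]
    linarith
  calc ∑ i, Real.log ((vnm + (θ i) ^ 2) / (vn + (θ i) ^ 2))
      ≤ ∑ i, (Real.log ((vnm + tθsq i) / (vn + tθsq i)) + (a i) ^ 2 / lam * ((θ i) ^ 2 - tθsq i)) :=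
        Finset.sum_le_sum fun i _ => hkey i
    _ = ∑ i, Real.log ((vnm + tθsq i) / (vn + tθsq i))
        + (∑ i, (a i) ^ 2 * (θ i) ^ 2 - ∑ i, (a i) ^ 2 * tθsq i) / lam := by
        rw [Finset.sum_add_distrib, ← Finset.sum_sub_distrib, Finset.sum_div]
        congr 1
        refine Finset.sum_congr rfl fun i _ => ?_
        field_simp
    _ ≤ ∑ i, Real.log ((vnm + tθsq i) / (vn + tθsq i)) := by
        have h4 : (∑ i, (a i) ^ 2 * (θ i) ^ 2 - ∑ i, (a i) ^ 2 * tθsq i) / lam ≤ 0 := by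
          apply div_nonpos_of_nonpos_of_nonneg _ hlam.le
          rw [hsum]; linarith
        linarith
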